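/- (Corollary 3.2) Let n ≥ 3 and let S = {x_1, ..., x_n} be a set of n distinct positive integers such that gcd(x_i, x_j) = x_1 for all distinct i, j ≤ n−1 and lcm(x_1, x_2, ..., x_{n−1}) divides x_n. Then the LCM matrix [S] is invertible. -/

import Mathlib

/-!
Write `a = x₁`, `M = xₙ` and `yᵢ = xᵢ` for `i < n`. Off the diagonal of the leading block,
`lcm(yᵢ, yⱼ) = yᵢ yⱼ / a`, and the last row and column are constantly `M`. If `v` lies in the
kernel, the last row gives `∑ v = 0`, the first row gives `∑ yⱼ vⱼ = -M vₙ`, and then every other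
row of the leading block forces `yᵢ vᵢ = -M vₙ` (this uses `yᵢ ≠ a`). Substituting back into
`∑ v = 0` leaves `vₙ ((n - 3) M / a - M ∑ 1 / yᵢ + 1) = 0`, the sum over `1 < i < n`. The factor is
nonzero because `a ∣ yᵢ` and `yᵢ ∣ M` with `yᵢ ≠ a, M`, so `yᵢ ≥ 2a` and `M ≥ 2yᵢ`: it is `≥ 1`
when `n ≥ 4` and `≤ -1` when `n = 3`.
-/

open Finset Matrix

section BorderedMatrix

variable {K ι : Type*} [Field K] [Fintype ι]
  {A : Matrix ι ι K} {y : ι → K} {a M : K} {z ℓ : ι}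

theorem mulVec_apply_of_row_eq (hrow : ∀ j, A ℓ j = M) (v : ι → K) :
    (A *ᵥ v) ℓ = M * ∑ j, v j := by
  simp [mulVec, dotProduct, hrow, mul_sum]

variable [DecidableEq ι]

theorem mulVec_apply_of_ne
    (hcol : ∀ i, A i ℓ = M) (hdiag : ∀ i, i ≠ ℓ → A i i = y i)
    (hoff : ∀ i j, i ≠ ℓ → j ≠ ℓ → i ≠ j → A i j = y i * y j / a)
    {i : ι} (hi : i ≠ ℓ) (v : ι → K) :
    (A *ᵥ v) i = y i / a * ∑ j ∈ univ.erase ℓ, y j * v j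
      + (y i - y i * y i / a) * v i + M * v ℓ := by
  have hentry : ∀ j ∈ univ.erase ℓ, A i j * v j
      = y i / a * (y j * v j) + if i = j then (y i - y i * y i / a) * v i else 0 := by
    intro j hj
    by_cases hij : i = j
    · subst hij; rw [hdiag i hi, if_pos rfl]; ring
    · rw [hoff i j hi (ne_of_mem_erase hj) hij, if_neg hij]; ring
  rw [mulVec, dotProduct, ← sum_erase_add _ _ (mem_univ ℓ), sum_congr rfl hentry,
    sum_add_distrib, ← mul_sum, sum_ite_eq, if_pos (mem_erase.2 ⟨hi, mem_univ i⟩), hcol]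

theorem eq_zero_of_mulVec_eq_zero
    (hrow : ∀ j, A ℓ j = M) (hcol : ∀ i, A i ℓ = M) (hdiag : ∀ i, i ≠ ℓ → A i i = y i)
    (hoff : ∀ i j, i ≠ ℓ → j ≠ ℓ → i ≠ j → A i j = y i * y j / a)
    (hzℓ : z ≠ ℓ) (hyz : y z = a) (ha : a ≠ 0) (hM : M ≠ 0)
    (hy : ∀ i ∈ (univ.erase ℓ).erase z, y i ≠ 0 ∧ y i ≠ a)
    (hnondeg : (#((univ.erase ℓ).erase z) - 1 : K) * M / a
      - M * ∑ i ∈ (univ.erase ℓ).erase z, 1 / y i + 1 ≠ 0)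
    {v : ι → K} (hv : A *ᵥ v = 0) : v = 0 := by
  set Q := (univ.erase ℓ).erase z
  have hzP : z ∈ univ.erase ℓ := mem_erase.2 ⟨hzℓ, mem_univ z⟩
  have hrow_at (i : ι) : (A *ᵥ v) i = 0 := congrFun hv i
  have hsum : ∑ j, v j = 0 := by
    simpa [mulVec_apply_of_row_eq hrow, hM] using hrow_at ℓ
  have hs : ∑ j ∈ univ.erase ℓ, y j * v j = -(M * v ℓ) := by
    have h := hrow_at z
    rw [mulVec_apply_of_ne hcol hdiag hoff hzℓ, hyz, div_self ha, mul_div_cancel_right₀ a ha] at h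
    linear_combination h
  have hQ (i : ι) (hi : i ∈ Q) : y i * v i = -(M * v ℓ) := by
    have h := hrow_at i
    rw [mulVec_apply_of_ne hcol hdiag hoff (ne_of_mem_erase (mem_of_mem_erase hi)), hs] at h
    have hfac : 1 - y i / a ≠ 0 := by
      rw [sub_ne_zero, ne_comm, Ne, div_eq_one_iff_eq ha]; exact (hy i hi).2
    refine (mul_right_injective₀ hfac) ?_
    linear_combination h
  have hvz : a * v z = (#Q - 1 : K) * (M * v ℓ) := by
    have h : ∑ j ∈ univ.erase ℓ, y j * v j = y z * v z + #Q * -(M * v ℓ) := by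
      rw [← sum_erase_add _ _ hzP, sum_congr rfl hQ, sum_const, nsmul_eq_mul, add_comm]
    rw [hs, hyz] at h
    linear_combination -h
  have hvℓ : v ℓ = 0 := by
    have hvQ : ∑ i ∈ Q, v i = -(M * v ℓ) * ∑ i ∈ Q, 1 / y i := by
      rw [mul_sum]
      refine sum_congr rfl fun i hi => ?_
      rw [← hQ i hi]; field_simp [(hy i hi).1]
    rw [← sum_erase_add _ _ (mem_univ ℓ), ← sum_erase_add _ _ hzP, hvQ] at hsum
    refine (mul_eq_zero.1 ?_).resolve_right hnondeg
    field_simp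
    linear_combination a * hsum - hvz
  funext i
  by_cases hiℓ : i = ℓ
  · rw [hiℓ, hvℓ]; rfl
  by_cases hiz : i = z
  · rw [hvℓ, mul_zero, mul_zero] at hvz
    rw [hiz]; exact (mul_eq_zero.1 hvz).resolve_left ha
  have hi : i ∈ Q := mem_erase.2 ⟨hiz, mem_erase.2 ⟨hiℓ, mem_univ i⟩⟩
  have h := hQ i hi
  rw [hvℓ, mul_zero, neg_zero] at h
  exact (mul_eq_zero.1 h).resolve_left (hy i hi).1

end BorderedMatrix

theorem card_sub_one_mul_div_sub_mul_sum_one_div_add_one_ne_zero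
    {K ι : Type*} [Field K] [LinearOrder K] [IsStrictOrderedRing K]
    {Q : Finset ι} (hQ : Q.Nonempty) {y : ι → K} {a M : K} (ha : 0 < a)
    (hya : ∀ i ∈ Q, 2 * a ≤ y i) (hyM : ∀ i ∈ Q, 2 * y i ≤ M) :
    (#Q - 1 : K) * M / a - M * ∑ i ∈ Q, 1 / y i + 1 ≠ 0 := by
  obtain ⟨i₀, hi₀⟩ := hQ
  have hy (i : ι) (hi : i ∈ Q) : 0 < y i := by linarith [hya i hi]
  have hM : 0 < M := by linarith [hy i₀ hi₀, hyM i₀ hi₀]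
  rcases (one_le_card.2 ⟨i₀, hi₀⟩).eq_or_lt with hcard | hcard
  · obtain ⟨j, rfl⟩ := card_eq_one.1 hcard.symm
    have hj := mem_singleton_self j
    have h2 : 2 ≤ M * (1 / y j) := by
      rw [mul_one_div, le_div_iff₀ (hy j hj)]; exact hyM j hj
    rw [card_singleton, sum_singleton, Nat.cast_one, sub_self, zero_mul, zero_div]
    linarith
  · have hsum : ∑ i ∈ Q, 1 / y i ≤ #Q * (1 / (2 * a)) := by
      rw [← nsmul_eq_mul]
      refine sum_le_card_nsmul _ _ _ fun i hi => ?_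
      exact one_div_le_one_div_of_le (by positivity) (hya i hi)
    have h2 : (2 : K) ≤ #Q := by exact_mod_cast hcard
    have hkey : M * ∑ i ∈ Q, 1 / y i ≤ (#Q - 1 : K) * M / a := by
      calc M * ∑ i ∈ Q, 1 / y i ≤ M * (#Q * (1 / (2 * a))) := by gcongr
        _ = #Q / 2 * M / a := by field_simp
        _ ≤ (#Q - 1 : K) * M / a := by gcongr; linarith
    linarith

theorem two_mul_le_of_dvd_of_ne {d k : ℕ} (hk : 0 < k) (hdvd : d ∣ k) (hne : k ≠ d) :
    2 * d ≤ k :=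
  not_lt.1 fun h => hne (Nat.eq_of_dvd_of_lt_two_mul hk.ne' hdvd h)

theorem isUnit_lcmMatrix_of_gcd_eq_of_dvd
    {K ι : Type*} [Field K] [LinearOrder K] [IsStrictOrderedRing K] [Fintype ι] [DecidableEq ι]
    {x : ι → ℕ} (hinj : Function.Injective x) (hpos : ∀ i, 0 < x i) {z ℓ : ι} (hzℓ : z ≠ ℓ)
    (hcard : 3 ≤ Fintype.card ι)
    (hgcd : ∀ i j, i ≠ ℓ → j ≠ ℓ → i ≠ j → Nat.gcd (x i) (x j) = x z)
    (hdvd : ∀ i, i ≠ ℓ → x i ∣ x ℓ) :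
    IsUnit (Matrix.of fun i j => (Nat.lcm (x i) (x j) : K)) := by
  have hzP : z ∈ univ.erase ℓ := mem_erase.2 ⟨hzℓ, mem_univ z⟩
  have hQ : ((univ.erase ℓ).erase z).Nonempty := by
    rw [← card_pos, card_erase_of_mem hzP, card_erase_of_mem (mem_univ ℓ), card_univ]
    omega
  have hmemQ {i : ι} (hi : i ∈ (univ.erase ℓ).erase z) : i ≠ z ∧ i ≠ ℓ :=
    ⟨ne_of_mem_erase hi, ne_of_mem_erase (mem_of_mem_erase hi)⟩
  have hlcm_top (i : ι) : Nat.lcm (x i) (x ℓ) = x ℓ := by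
    by_cases hi : i = ℓ
    · rw [hi, Nat.lcm_self]
    · exact Nat.lcm_eq_right (hdvd i hi)
  have hoff (i j : ι) (hi : i ≠ ℓ) (hj : j ≠ ℓ) (hij : i ≠ j) :
      (Nat.lcm (x i) (x j) : K) = x i * x j / x z := by
    rw [eq_div_iff (by exact_mod_cast (hpos z).ne'), ← hgcd i j hi hj hij]
    exact_mod_cast (mul_comm _ _).trans (Nat.gcd_mul_lcm (x i) (x j))
  have hbounds (i : ι) (hi : i ∈ (univ.erase ℓ).erase z) :
      2 * x z ≤ x i ∧ 2 * x i ≤ x ℓ := by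
    obtain ⟨hiz, hiℓ⟩ := hmemQ hi
    have hzi : x z ∣ x i := hgcd z i hzℓ hiℓ (Ne.symm hiz) ▸ Nat.gcd_dvd_right _ _
    exact ⟨two_mul_le_of_dvd_of_ne (hpos i) hzi (hinj.ne hiz),
      two_mul_le_of_dvd_of_ne (hpos ℓ) (hdvd i hiℓ) (hinj.ne (Ne.symm hiℓ))⟩
  refine (isUnit_iff_isUnit_det _).2 (isUnit_iff_ne_zero.2 fun hdet => ?_)
  obtain ⟨v, hv0, hv⟩ := exists_mulVec_eq_zero_iff.2 hdet
  refine hv0 (eq_zero_of_mulVec_eq_zero (y := fun i => (x i : K)) (M := (x ℓ : K))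
    (fun j => by rw [Nat.lcm_comm, hlcm_top])
    (fun i => by rw [hlcm_top]) (fun i _ => by rw [Nat.lcm_self])
    hoff hzℓ rfl
    (by exact_mod_cast (hpos z).ne') (by exact_mod_cast (hpos ℓ).ne')
    (fun i hi => ⟨by exact_mod_cast (hpos i).ne', by exact_mod_cast hinj.ne (hmemQ hi).1⟩)
    (card_sub_one_mul_div_sub_mul_sum_one_div_add_one_ne_zero hQ
      (by exact_mod_cast (hpos z)) (fun i hi => by exact_mod_cast (hbounds i hi).1)
      (fun i hi => by exact_mod_cast (hbounds i hi).2)) hv)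

/-- Corollary 3.2: Let `n ≥ 3` and let `S = {x_1, …, x_n}` be a set of `n`
distinct positive integers with `gcd(x_i, x_j) = x_1` for all distinct `i, j ≤ n−1` and
`lcm(x_1, …, x_{n−1}) ∣ x_n`. Then the LCM matrix `[S]` is invertible.
(Here `Fin n` is 0-indexed: `x ⟨0,_⟩` is `x_1` and `x ⟨n-1,_⟩` is `x_n`.) -/
theorem lcmMatrix_x1set_plus_top_isUnit
    {n : ℕ} (hn : 3 ≤ n) (x : Fin n → ℕ) (hinj : Function.Injective x)
    (hpos : ∀ i, 0 < x i)
    (hgcd : ∀ i j : Fin n, i ≠ j → (i : ℕ) < n - 1 → (j : ℕ) < n - 1 →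
      Nat.gcd (x i) (x j) = x ⟨0, by omega⟩)
    (hlcm : (Finset.univ.filter (fun i : Fin n => (i : ℕ) < n - 1)).lcm x ∣
      x ⟨n - 1, by omega⟩) :
    IsUnit (Matrix.of fun i j : Fin n => (Nat.lcm (x i) (x j) : ℚ)) := by
  have hlt {i : Fin n} (hi : i ≠ ⟨n - 1, by omega⟩) : (i : ℕ) < n - 1 := by
    have : (i : ℕ) ≠ n - 1 := fun h => hi (Fin.ext h)
    omega
  refine isUnit_lcmMatrix_of_gcd_eq_of_dvd hinj hpos (z := ⟨0, by omega⟩) (ℓ := ⟨n - 1, by omega⟩)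
    (by rw [Ne, Fin.ext_iff]; simp only; omega) (by rwa [Fintype.card_fin])
    (fun i j hi hj hij => hgcd i j hij (hlt hi) (hlt hj))
    (fun i hi => (dvd_lcm (mem_filter.2 ⟨mem_univ i, hlt hi⟩)).trans hlcm)
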